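/- arXiv:2002.06804 — 2 statements merged into one kernel-verified Lean document; each statement's English description precedes it below -/
import Mathlib

section
/- If 0 < p < 1 and the c_i are nonnegative with Σ c_i = 1, then E[(S-p)⁴] ≤ max(3, 1/(p(1-p)) - 3) · p²(1-p)² · (Σ c_i²)², where S = Σ c_i β_i with β_i iid Bernoulli(p). -/
/-!
Write `S - p = ∑ c i * (β i - p)` as a sum of independent centred variables. Expanding the fourth
power of a sum of two independent centred variables binomially, the odd cross terms vanish, and
induction on the number of summands gives `E[(S - p)⁴] = 3 q² A² + (q - 6 q²) B` with
`q = p (1 - p)`, `A = ∑ c i²` and `B = ∑ c i⁴`. Since `0 ≤ B ≤ A²`, the bound follows by cases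
on the sign of `q - 6 q²`.
-/

open MeasureTheory ProbabilityTheory

section Moments

variable {Ω : Type*} [MeasurableSpace Ω] {μ : Measure Ω}

lemma MeasureTheory.integral_finsetSum_eq_zero {ι : Type*} (s : Finset ι) {Y : ι → Ω → ℝ}
    (hint : ∀ i, Integrable (Y i) μ) (h0 : ∀ i, ∫ ω, Y i ω ∂μ = 0) :
    ∫ ω, ∑ i ∈ s, Y i ω ∂μ = 0 := by
  simp [integral_finsetSum _ fun i _ ↦ hint i, h0]

lemma MeasureTheory.MemLp.integrable_pow_of_le [IsFiniteMeasure μ] {X : Ω → ℝ} {n k : ℕ}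
    (hX : MemLp X n μ) (hk : k ≤ n) : Integrable (fun ω ↦ X ω ^ k) μ := by
  refine ((hX.mono_exponent (by exact_mod_cast hk)).integrable_norm_pow').mono'
    (hX.aestronglyMeasurable.pow k) (.of_forall fun ω ↦ ?_)
  simp [norm_pow]

lemma ProbabilityTheory.IndepFun.integral_add_pow [IsFiniteMeasure μ] {X Z : Ω → ℝ}
    (hXZ : IndepFun X Z μ) {n : ℕ} (hX : MemLp X n μ) (hZ : MemLp Z n μ) :
    ∫ ω, (X ω + Z ω) ^ n ∂μ =
      ∑ k ∈ Finset.range (n + 1), (∫ ω, X ω ^ k ∂μ) * (∫ ω, Z ω ^ (n - k) ∂μ) * n.choose k := by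
  simp_rw [add_pow]
  rw [integral_finsetSum]
  · refine Finset.sum_congr rfl fun k _ ↦ ?_
    rw [integral_mul_const, hXZ.integral_fun_comp_mul_comp (f := (· ^ k)) (g := (· ^ (n - k)))
      hX.aestronglyMeasurable.aemeasurable hZ.aestronglyMeasurable.aemeasurable
      (by fun_prop) (by fun_prop)]
  · intro k hk
    have hk : k ≤ n := Nat.lt_succ_iff.mp (Finset.mem_range.mp hk)
    refine Integrable.mul_const ?_ _
    exact (hXZ.comp (measurable_id.pow_const k) (measurable_id.pow_const (n - k))).integrable_mul
      (hX.integrable_pow_of_le hk) (hZ.integrable_pow_of_le (Nat.sub_le n k))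

end Moments

namespace ProbabilityTheory.iIndepFun

variable {Ω : Type*} [MeasurableSpace Ω] {μ : Measure Ω} [IsProbabilityMeasure μ]
  {Y : ℕ → Ω → ℝ}

lemma integral_sum_range_succ_pow (hY : iIndepFun Y μ) {n : ℕ} (hL : ∀ i, MemLp (Y i) n μ)
    (m : ℕ) :
    ∫ ω, (∑ i ∈ Finset.range (m + 1), Y i ω) ^ n ∂μ =
      ∑ k ∈ Finset.range (n + 1), (∫ ω, (∑ i ∈ Finset.range m, Y i ω) ^ k ∂μ) *
        (∫ ω, Y m ω ^ (n - k) ∂μ) * n.choose k := by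
  have hind := hY.indepFun_finsetSum_of_notMem₀ (fun i ↦ (hL i).aestronglyMeasurable.aemeasurable)
    (Finset.notMem_range_self (n := m))
  simpa only [Finset.sum_apply, Finset.sum_range_succ] using
    hind.integral_add_pow (memLp_finsetSum' _ fun i _ ↦ hL i) (hL m)

lemma integral_sum_range_sq (hY : iIndepFun Y μ) (hL : ∀ i, MemLp (Y i) 2 μ)
    (h0 : ∀ i, ∫ ω, Y i ω ∂μ = 0) (m : ℕ) :
    ∫ ω, (∑ i ∈ Finset.range m, Y i ω) ^ 2 ∂μ = ∑ i ∈ Finset.range m, ∫ ω, Y i ω ^ 2 ∂μ := by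
  induction m with
  | zero => simp
  | succ m ih =>
    rw [hY.integral_sum_range_succ_pow hL, Finset.sum_range_succ _ m, ← ih]
    simp [Finset.sum_range_succ, h0,
      integral_finsetSum_eq_zero _ (fun i ↦ (hL i).integrable one_le_two) h0]
    ring

lemma integral_sum_range_pow_four (hY : iIndepFun Y μ) (hL : ∀ i, MemLp (Y i) 4 μ)
    (h0 : ∀ i, ∫ ω, Y i ω ∂μ = 0) (m : ℕ) :
    ∫ ω, (∑ i ∈ Finset.range m, Y i ω) ^ 4 ∂μ =
      3 * (∑ i ∈ Finset.range m, ∫ ω, Y i ω ^ 2 ∂μ) ^ 2 +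
        ∑ i ∈ Finset.range m, (∫ ω, Y i ω ^ 4 ∂μ - 3 * (∫ ω, Y i ω ^ 2 ∂μ) ^ 2) := by
  have hL2 i : MemLp (Y i) 2 μ := (hL i).mono_exponent (by norm_num)
  induction m with
  | zero => simp
  | succ m ih =>
    rw [hY.integral_sum_range_succ_pow hL, Finset.sum_range_succ _ m, Finset.sum_range_succ _ m]
    simp [Finset.sum_range_succ, h0, ih, hY.integral_sum_range_sq hL2 h0, Nat.choose,
      integral_finsetSum_eq_zero _ (fun i ↦ (hL2 i).integrable one_le_two) h0]
    ring

end ProbabilityTheory.iIndepFun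

lemma integral_comp_of_bernoulli {Ω : Type*} [MeasurableSpace Ω] {μ : Measure Ω}
    [IsProbabilityMeasure μ] {X : Ω → ℝ} (hX : Measurable X) (hval : ∀ ω, X ω = 0 ∨ X ω = 1)
    {p : ℝ} (hp : 0 ≤ p) (hX1 : μ {ω | X ω = 1} = ENNReal.ofReal p) (g : ℝ → ℝ) :
    ∫ ω, g (X ω) ∂μ = p * g 1 + (1 - p) * g 0 := by
  have hA : MeasurableSet {ω | X ω = 1} := hX (measurableSet_singleton 1)
  have hg : (fun ω ↦ g (X ω)) = fun ω ↦ {ω | X ω = 1}.indicator (fun _ ↦ g 1 - g 0) ω + g 0 := by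
    funext ω
    rcases hval ω with h | h <;> simp [Set.indicator, h]
  rw [hg, integral_add ((integrable_const _).indicator hA) (integrable_const _),
    integral_indicator_const _ hA, integral_const, measureReal_def, hX1, probReal_univ,
    ENNReal.toReal_ofReal hp]
  simp only [smul_eq_mul, one_mul]
  ring

lemma three_sq_mul_sq_add_le_max_mul {q A B : ℝ} (hq : 0 < q) (hB : 0 ≤ B) (hBA : B ≤ A ^ 2) :
    3 * q ^ 2 * A ^ 2 + (q - 6 * q ^ 2) * B ≤ max 3 (1 / q - 3) * q ^ 2 * A ^ 2 := by
  rcases le_total (q - 6 * q ^ 2) 0 with h | h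
  · calc 3 * q ^ 2 * A ^ 2 + (q - 6 * q ^ 2) * B ≤ 3 * q ^ 2 * A ^ 2 := by
          nlinarith [mul_nonpos_of_nonpos_of_nonneg h hB]
      _ ≤ max 3 (1 / q - 3) * q ^ 2 * A ^ 2 := by gcongr; exact le_max_left _ _
  · calc 3 * q ^ 2 * A ^ 2 + (q - 6 * q ^ 2) * B
          ≤ 3 * q ^ 2 * A ^ 2 + (q - 6 * q ^ 2) * A ^ 2 := by gcongr
      _ = (1 / q - 3) * q ^ 2 * A ^ 2 := by field_simp; ring
      _ ≤ max 3 (1 / q - 3) * q ^ 2 * A ^ 2 := by gcongr; exact le_max_right _ _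

theorem fourth_central_moment_bound_general {Ω : Type*} [MeasurableSpace Ω]
    (μ : Measure Ω) [IsProbabilityMeasure μ] (p : ℝ) (hp0 : 0 < p) (hp1 : p < 1)
    (β : ℕ → Ω → ℝ) (hmeas : ∀ i, Measurable (β i))
    (hval : ∀ i ω, β i ω = 0 ∨ β i ω = 1)
    (hβp : ∀ i, μ {ω | β i ω = 1} = ENNReal.ofReal p)
    (hindep : iIndepFun β μ)
    (n : ℕ) (c : ℕ → ℝ)
    (hc1 : ∑ i ∈ Finset.range n, c i = 1) :
    (∫ ω, ((∑ i ∈ Finset.range n, c i * β i ω) - p) ^ 4 ∂μ) ≤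
      max 3 (1 / (p * (1 - p)) - 3) * p ^ 2 * (1 - p) ^ 2 *
        (∑ i ∈ Finset.range n, (c i) ^ 2) ^ 2 := by
  set q := p * (1 - p)
  set Y : ℕ → Ω → ℝ := fun i ω ↦ c i * (β i ω - p)
  have hY : iIndepFun Y μ := hindep.comp (fun i x ↦ c i * (x - p)) fun i ↦ by fun_prop
  have hYL i : MemLp (Y i) 4 μ :=
    ((MemLp.of_bound (hmeas i).aestronglyMeasurable 1 <| .of_forall fun ω ↦ by
      rcases hval i ω with h | h <;> simp [h]).sub (memLp_const p)).const_mul (c i)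
  have hmom i (g : ℝ → ℝ) := integral_comp_of_bernoulli (hmeas i) (hval i) hp0.le (hβp i) g
  have hmean i : ∫ ω, Y i ω ∂μ = 0 := by rw [hmom i (fun x ↦ c i * (x - p))]; ring
  have hvar i : ∫ ω, Y i ω ^ 2 ∂μ = q * c i ^ 2 := by
    rw [hmom i (fun x ↦ (c i * (x - p)) ^ 2)]; ring
  have hexcess i : ∫ ω, Y i ω ^ 4 ∂μ - 3 * (∫ ω, Y i ω ^ 2 ∂μ) ^ 2 =
      (q - 6 * q ^ 2) * (c i ^ 2) ^ 2 := by
    rw [hmom i (fun x ↦ (c i * (x - p)) ^ 4), hvar]; ring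
  have hcentered ω : (∑ i ∈ Finset.range n, c i * β i ω) - p = ∑ i ∈ Finset.range n, Y i ω := by
    simp [Y, mul_sub, Finset.sum_sub_distrib, ← Finset.sum_mul, hc1]
  simp_rw [hcentered, hY.integral_sum_range_pow_four hYL hmean, hexcess, hvar, ← Finset.mul_sum]
  calc _ = 3 * q ^ 2 * (∑ i ∈ Finset.range n, c i ^ 2) ^ 2 +
        (q - 6 * q ^ 2) * ∑ i ∈ Finset.range n, (c i ^ 2) ^ 2 := by ring
    _ ≤ max 3 (1 / q - 3) * q ^ 2 * (∑ i ∈ Finset.range n, c i ^ 2) ^ 2 :=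
      three_sq_mul_sq_add_le_max_mul (mul_pos hp0 (sub_pos.2 hp1)) (by positivity)
        (Finset.sum_sq_le_sq_sum_of_nonneg fun i _ ↦ sq_nonneg _)
    _ = _ := by ring

/-- **Bound on the fourth central moment.** For `S = ∑_{i<n} c i * β i` with `β i`
iid Bernoulli(p), `0 < p < 1`, and `c i ≥ 0` summing to `1`,
`E[(S-p)⁴] ≤ max 3 (1/(p(1-p)) - 3) · p²(1-p)² · (∑ c i ²)²`. -/
theorem fourth_central_moment_bound {Ω : Type*} [MeasurableSpace Ω]
    (μ : Measure Ω) [IsProbabilityMeasure μ] (p : ℝ) (hp0 : 0 < p) (hp1 : p < 1)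
    (β : ℕ → Ω → ℝ) (hmeas : ∀ i, Measurable (β i))
    (hval : ∀ i ω, β i ω = 0 ∨ β i ω = 1)
    (hβp : ∀ i, μ {ω | β i ω = 1} = ENNReal.ofReal p)
    (hindep : iIndepFun β μ)
    (n : ℕ) (c : ℕ → ℝ) (hc0 : ∀ i, 0 ≤ c i)
    (hsupp : ∀ i, n ≤ i → c i = 0)
    (hc1 : ∑ i ∈ Finset.range n, c i = 1) :
    (∫ ω, ((∑ i ∈ Finset.range n, c i * β i ω) - p) ^ 4 ∂μ) ≤
      max 3 (1 / (p * (1 - p)) - 3) * p ^ 2 * (1 - p) ^ 2 *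
        (∑ i ∈ Finset.range n, (c i) ^ 2) ^ 2 :=
  fourth_central_moment_bound_general μ p hp0 hp1 β hmeas hval hβp hindep n c hc1
end

section
/- If p ≤ 1/2 and t = 1/2, then for any nonnegative sequence (c_i) summing to 1, P(Σ c_i β_i ≥ 1/2) ≤ p + (1-p)p, with equality attained by c_1 = c_2 = 1/2; i.e., bold play on two equal stakes is optimal. -/
/-!
Pick a bet `a` with positive stake and truncate the stakes to an initial segment `range N`
whose tail `ε` is smaller than `c a`. Conditioning on `β a`: if it wins we bound the probability
by `p`; if it loses, the other stakes in `range N` must reach `1 / 2 - ε`, which is more than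
half of their total. The family `F` of winning sets of successes is therefore monotone and never
contains both `T` and its complement, and for such a family the `p`-biased probability `W p` is
at most `p` when `p ≤ 1 / 2`. Indeed `W (1 / 2) ≤ 1 / 2` by pairing `T` with its complement,
and the Poincaré-type inequality `W (1 - W) ≤ p (1 - p) W'` for monotone families (by induction,
conditioning on one coordinate) makes `logOdds W - logOdds` nondecreasing on `(0, 1)`.
-/

open MeasureTheory ProbabilityTheory

section LogOdds

open Real Set

noncomputable def logOdds (x : ℝ) : ℝ := log x - log (1 - x)

theorem strictMonoOn_logOdds : StrictMonoOn logOdds (Ioo 0 1) := fun x hx y hy hxy => by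
  have := log_lt_log hx.1 hxy
  have := log_lt_log (sub_pos.2 hy.2) (sub_lt_sub_left hxy 1)
  unfold logOdds
  linarith

theorem hasDerivAt_logOdds {x : ℝ} (hx : x ∈ Ioo 0 1) :
    HasDerivAt logOdds (1 / (x * (1 - x))) x := by
  have h1 : 1 - x ≠ 0 := (sub_pos.2 hx.2).ne'
  have h0 : x ≠ 0 := hx.1.ne'
  refine ((hasDerivAt_log h0).sub (((hasDerivAt_id' x).const_sub 1).log h1)).congr_deriv ?_
  field_simp
  ring

theorem monotoneOn_logOdds_comp_sub_logOdds {W : ℝ → ℝ} (hW : Differentiable ℝ W)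
    (hW01 : ∀ q ∈ Ioo 0 1, W q ∈ Ioo 0 1)
    (hode : ∀ q ∈ Ioo 0 1, W q * (1 - W q) ≤ q * (1 - q) * deriv W q) :
    MonotoneOn (fun q => logOdds (W q) - logOdds q) (Ioo 0 1) := by
  have hderiv : ∀ q ∈ Ioo (0 : ℝ) 1, HasDerivAt (fun q => logOdds (W q) - logOdds q)
      (1 / (W q * (1 - W q)) * deriv W q - 1 / (q * (1 - q))) q := fun q hq =>
    ((hasDerivAt_logOdds (hW01 q hq)).comp q (hW q).hasDerivAt).sub (hasDerivAt_logOdds hq)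
  refine monotoneOn_of_deriv_nonneg (convex_Ioo 0 1)
    (fun q hq => (hderiv q hq).continuousAt.continuousWithinAt)
    (fun q hq => (hderiv q (interior_subset hq)).differentiableAt.differentiableWithinAt)
    fun q hq => ?_
  rw [interior_Ioo] at hq
  obtain ⟨hW0, hW1⟩ := hW01 q hq
  have hWq : 0 < W q * (1 - W q) := mul_pos hW0 (sub_pos.2 hW1)
  have hq' : 0 < q * (1 - q) := mul_pos hq.1 (sub_pos.2 hq.2)
  rw [(hderiv q hq).deriv, sub_nonneg, ← mul_div_right_comm, one_mul,
    div_le_div_iff₀ hq' hWq, one_mul]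
  linarith [hode q hq]

end LogOdds

section BiasedProb

open Finset

variable {α : Type*} (F : Finset α → Prop) [DecidablePred F] (s : Finset α) (p : ℝ)

/-- The probability that the random set of successes among `s` satisfies `F`, when every element
of `s` succeeds independently with probability `p`. -/
noncomputable def biasedProb : ℝ :=
  ∑ T ∈ s.powerset with F T, p ^ #T * (1 - p) ^ (#s - #T)

theorem biasedProb_empty : biasedProb F ∅ p = if F ∅ then 1 else 0 := by
  by_cases h : F ∅ <;> simp [biasedProb, filter_singleton, h]

theorem biasedProb_true : biasedProb (fun _ => True) s p = 1 := by
  simp [biasedProb, sum_pow_mul_eq_add_pow]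

theorem biasedProb_not : biasedProb (fun T => ¬F T) s p = 1 - biasedProb F s p := by
  rw [← biasedProb_true s p, biasedProb, biasedProb, biasedProb, eq_sub_iff_add_eq,
    sum_filter_not_add_sum_filter, filter_true_of_mem fun _ _ => trivial]

variable {F p}

theorem biasedProb_mono {G : Finset α → Prop} [DecidablePred G] (hp0 : 0 ≤ p) (hp1 : p ≤ 1)
    (hFG : ∀ T, F T → G T) : biasedProb F s p ≤ biasedProb G s p :=
  sum_le_sum_of_subset_of_nonneg (monotone_filter_right _ fun T _ => hFG T) fun _ _ _ => by
    have : 0 ≤ 1 - p := by linarith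
    positivity

theorem biasedProb_nonneg (hp0 : 0 ≤ p) (hp1 : p ≤ 1) : 0 ≤ biasedProb F s p := by
  simpa [biasedProb] using biasedProb_mono s (F := fun _ => False) hp0 hp1 (fun _ => False.elim)

theorem biasedProb_le_one (hp0 : 0 ≤ p) (hp1 : p ≤ 1) : biasedProb F s p ≤ 1 := by
  linarith [biasedProb_not F s p, biasedProb_nonneg (F := (¬F ·)) s hp0 hp1]

theorem biasedProb_pos {T : Finset α} (hTs : T ⊆ s) (hT : F T) (hp0 : 0 < p) (hp1 : p < 1) :
    0 < biasedProb F s p := by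
  have : 0 < 1 - p := by linarith
  refine sum_pos' (fun _ _ => by positivity) ⟨T, mem_filter.2 ⟨mem_powerset.2 hTs, hT⟩, ?_⟩
  positivity

theorem differentiable_biasedProb : Differentiable ℝ (biasedProb F s) := by
  unfold biasedProb
  fun_prop

variable [DecidableEq α]

theorem biasedProb_insert {a : α} (ha : a ∉ s) :
    biasedProb F (insert a s) p
      = (1 - p) * biasedProb F s p + p * biasedProb (fun T => F (insert a T)) s p := by
  simp only [biasedProb, sum_filter, sum_powerset_insert ha, mul_sum, card_insert_of_notMem ha]
  congr 1 <;> refine sum_congr rfl fun T hT => ?_ <;> split_ifs <;> try simp only [mul_zero]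
  · rw [Nat.sub_add_comm (card_le_card (mem_powerset.1 hT)), pow_succ]; ring
  · rw [card_insert_of_notMem fun h => ha (mem_powerset.1 hT h), Nat.add_sub_add_right, pow_succ]
    ring

theorem biasedProb_sdiff_one_sub :
    biasedProb (fun T => F (s \ T)) s (1 - p) = biasedProb F s p := by
  refine sum_nbij' (s \ ·) (s \ ·) ?_ ?_ ?_ ?_ ?_ <;> simp only [mem_filter, mem_powerset]
  · exact fun T hT => ⟨sdiff_subset, hT.2⟩
  · exact fun T hT => ⟨sdiff_subset, by rw [Finset.sdiff_sdiff_eq_self hT.1]; exact hT.2⟩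
  · exact fun T hT => Finset.sdiff_sdiff_eq_self hT.1
  · exact fun T hT => Finset.sdiff_sdiff_eq_self hT.1
  · intro T hT
    rw [card_sdiff_of_subset hT.1, Nat.sub_sub_self (card_le_card hT.1), sub_sub_cancel, mul_comm]

theorem biasedProb_half_le (hdual : ∀ T ⊆ s, F T → ¬F (s \ T)) :
    biasedProb F s (1 / 2) ≤ 1 / 2 := by
  have hcompl : biasedProb F s (1 / 2) ≤ biasedProb (fun T => ¬F (s \ T)) s (1 / 2) :=
    sum_le_sum_of_subset_of_nonneg (fun T hT => by
      simp only [mem_filter, mem_powerset] at hT ⊢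
      exact ⟨hT.1, hdual T hT.1 hT.2⟩) fun _ _ _ => by positivity
  have := biasedProb_sdiff_one_sub s (F := F) (p := 1 / 2)
  rw [biasedProb_not (fun T => F (s \ T))] at hcompl
  norm_num at this hcompl ⊢
  linarith

theorem biasedProb_mul_one_sub_le (hF : Monotone F) (hp0 : 0 ≤ p) (hp1 : p ≤ 1) :
    biasedProb F s p * (1 - biasedProb F s p) ≤ p * (1 - p) * deriv (biasedProb F s) p := by
  induction s using Finset.induction_on generalizing F with
  | empty =>
    have : biasedProb F ∅ = fun _ => if F ∅ then 1 else 0 := funext (biasedProb_empty F)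
    rw [this]
    split_ifs <;> simp
  | @insert a s ha ih =>
    set A := biasedProb F s
    set B := biasedProb (fun T => F (insert a T)) s
    have hrec : biasedProb F (insert a s) = fun q => (1 - q) * A q + q * B q :=
      funext fun q => biasedProb_insert s ha
    have hderiv : deriv (biasedProb F (insert a s)) p
        = B p - A p + (1 - p) * deriv A p + p * deriv B p := by
      rw [hrec]
      have hA := (differentiable_biasedProb (F := F) s p).hasDerivAt
      have hB := (differentiable_biasedProb (F := fun T => F (insert a T)) s p).hasDerivAt
      rw [((((hasDerivAt_id' p).const_sub 1).fun_mul hA).fun_add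
        ((hasDerivAt_id' p).fun_mul hB)).deriv]
      ring
    have ihA := ih hF
    have ihB := ih (fun T U hTU => hF (insert_subset_insert a hTU))
    have hAB : A p ≤ B p := biasedProb_mono s hp0 hp1 fun T => hF (subset_insert a T)
    have hA0 : 0 ≤ A p := biasedProb_nonneg s hp0 hp1
    have hB1 : B p ≤ 1 := biasedProb_le_one s hp0 hp1
    rw [hderiv, hrec]
    -- by the induction hypotheses, RHS - LHS ≥ p (1 - p) (B - A) (1 - (B - A)) ≥ 0
    nlinarith [mul_nonneg (mul_nonneg hp0 (sub_nonneg.2 hp1)) (mul_nonneg (sub_nonneg.2 hAB)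
      (by linarith : 0 ≤ 1 - (B p - A p))), mul_le_mul_of_nonneg_left ihA (sub_nonneg.2 hp1),
      mul_le_mul_of_nonneg_left ihB hp0]

variable {s}

theorem biasedProb_le_self (hF : Monotone F) (hdual : ∀ T ⊆ s, F T → ¬F (s \ T))
    (hp0 : 0 ≤ p) (hp : p ≤ 1 / 2) : biasedProb F s p ≤ p := by
  have hempty : ¬F ∅ := fun h => hdual ∅ (empty_subset s) h (by simpa using hF (empty_subset s) h)
  by_cases hs : ¬F s
  · refine (sum_eq_zero fun T hT => ?_).le.trans hp0
    simp only [mem_filter, mem_powerset] at hT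
    exact absurd (hF hT.1 hT.2) hs
  rw [not_not] at hs
  rcases hp0.eq_or_lt with rfl | hp0
  · refine (sum_eq_zero fun T hT => ?_).le
    have hT : T.Nonempty := nonempty_iff_ne_empty.2 fun h => hempty (h ▸ (mem_filter.1 hT).2)
    simp [zero_pow hT.card_pos.ne']
  have hW01 : ∀ q ∈ Set.Ioo (0 : ℝ) 1, biasedProb F s q ∈ Set.Ioo 0 1 := fun q hq => by
    have := biasedProb_pos (F := (¬F ·)) s (empty_subset s) hempty hq.1 hq.2
    exact ⟨biasedProb_pos s subset_rfl hs hq.1 hq.2, by linarith [biasedProb_not F s q]⟩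
  have hmono := monotoneOn_logOdds_comp_sub_logOdds (differentiable_biasedProb s) hW01
    fun q hq => biasedProb_mul_one_sub_le s hF hq.1.le hq.2.le
  have hhalf : (1 / 2 : ℝ) ∈ Set.Ioo 0 1 := by norm_num
  have hp01 : p ∈ Set.Ioo 0 1 := ⟨hp0, by linarith⟩
  have hle := hmono hp01 hhalf hp
  have hle_half :=
    (strictMonoOn_logOdds.le_iff_le (hW01 _ hhalf) hhalf).2 (biasedProb_half_le s hdual)
  exact (strictMonoOn_logOdds.le_iff_le (hW01 p hp01) hp01).1 (by linarith)

end BiasedProb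

section Stakes

open Finset

theorem tsum_mul_le_sum_mul_add {ι : Type*} {c b : ι → ℝ} (hc : Summable c) (hc0 : ∀ i, 0 ≤ c i)
    (hb0 : ∀ i, 0 ≤ b i) (hb1 : ∀ i, b i ≤ 1) (S : Finset ι) :
    ∑' i, c i * b i ≤ ∑ i ∈ S, c i * b i + (∑' i, c i - ∑ i ∈ S, c i) := by
  have hcb : Summable fun i => c i * b i :=
    hc.of_nonneg_of_le (fun i => mul_nonneg (hc0 i) (hb0 i)) fun i =>
      mul_le_of_le_one_right (hc0 i) (hb1 i)
  have := (hc.sub hcb).sum_le_tsum S fun i _ =>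
    sub_nonneg.2 (mul_le_of_le_one_right (hc0 i) (hb1 i))
  rw [hc.tsum_sub hcb, sum_sub_distrib] at this
  linarith

theorem exists_lt_sum_range {c : ℕ → ℝ} (hc : Summable c) {a : ℕ} (ha : 0 < c a) :
    ∃ N, a < N ∧ ∑' i, c i - c a < ∑ i ∈ range N, c i :=
  ((hc.tendsto_sum_tsum_nat.eventually (lt_mem_nhds (by linarith))).and
    (Filter.eventually_gt_atTop a)).exists.imp fun _ h => ⟨h.2, h.1⟩

end Stakes

section Bernoulli

open Finset

variable {Ω ι : Type*} [DecidableEq ι] {β : ι → Ω → ℝ}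

theorem setOf_filter_eq_one_eq_biInter {s T : Finset ι} (hT : T ⊆ s) :
    {ω | {i ∈ s | β i ω = 1} = T}
      = ⋂ i ∈ s, β i ⁻¹' (if i ∈ T then {1} else {1}ᶜ) := by
  ext ω
  simp only [Set.mem_ofPred_eq, Set.mem_iInter, Set.mem_preimage, Finset.ext_iff, mem_filter]
  refine ⟨fun h i hi => ?_, fun h i => ⟨fun hi => ?_, fun hi => ⟨hT hi, ?_⟩⟩⟩
  · split_ifs with hiT <;> simpa [hi, hiT] using h i
  · by_contra hiT
    simpa [hiT, hi.2] using h i hi.1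
  · simpa [hi] using h i (hT hi)

variable [MeasurableSpace Ω] {μ : Measure Ω} [IsProbabilityMeasure μ] {p : ℝ}
  (hmeas : ∀ i, Measurable (β i)) (hβp : ∀ i, μ {ω | β i ω = 1} = ENNReal.ofReal p)
  (hindep : iIndepFun β μ)
include hmeas hβp hindep

theorem measureReal_filter_eq_one_eq (hp0 : 0 ≤ p) {s T : Finset ι} (hT : T ⊆ s) :
    μ.real {ω | {i ∈ s | β i ω = 1} = T} = p ^ #T * (1 - p) ^ (#s - #T) := by
  have hone : ∀ i, MeasurableSet (β i ⁻¹' {1}) := fun i => hmeas i (measurableSet_singleton 1)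
  have hfactor : ∀ i, (μ (β i ⁻¹' (if i ∈ T then {1} else {1}ᶜ))).toReal
      = if i ∈ T then p else 1 - p := fun i => by
    have hp : μ.real (β i ⁻¹' {1}) = p := by
      rw [measureReal_def, ← ENNReal.toReal_ofReal hp0, ← hβp i]
      rfl
    split_ifs
    · exact hp
    · rw [Set.preimage_compl, ← measureReal_def, probReal_compl_eq_one_sub (hone i), hp]
  rw [setOf_filter_eq_one_eq_biInter hT, measureReal_def,
    hindep.measure_inter_preimage_eq_mul s fun i _ => by split_ifs <;> simp,
    ENNReal.toReal_prod, prod_congr rfl fun i _ => hfactor i, prod_ite, prod_const, prod_const,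
    filter_mem_eq_inter, inter_eq_right.2 hT, filter_notMem_eq_sdiff, card_sdiff_of_subset hT]

theorem measureReal_setOf_filter_eq_one (hp0 : 0 ≤ p) (F : Finset ι → Prop) [DecidablePred F]
    (s : Finset ι) : μ.real {ω | F {i ∈ s | β i ω = 1}} = biasedProb F s p := by
  have hunion : {ω | F {i ∈ s | β i ω = 1}}
      = ⋃ T ∈ {T ∈ s.powerset | F T}, {ω | {i ∈ s | β i ω = 1} = T} := by
    ext ω
    simp [filter_subset]
  rw [hunion, measureReal_biUnion_finset]
  · exact sum_congr rfl fun T hT =>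
      measureReal_filter_eq_one_eq hmeas hβp hindep hp0 (mem_powerset.1 (mem_filter.1 hT).1)
  · exact fun T _ U _ hTU => Set.disjoint_left.2 fun ω hT hU => hTU (hT.symm.trans hU)
  · intro T hT
    rw [setOf_filter_eq_one_eq_biInter (mem_powerset.1 (mem_filter.1 hT).1)]
    exact measurableSet_biInter s fun i _ => hmeas i (by split_ifs <;> simp)

theorem measureReal_setOf_le_sum_mul (hp0 : 0 ≤ p) (hval : ∀ i ω, β i ω = 0 ∨ β i ω = 1) (c : ι → ℝ)
    (t : ℝ) (s : Finset ι) :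
    μ.real {ω | t ≤ ∑ i ∈ s, c i * β i ω} = biasedProb (fun T => t ≤ ∑ i ∈ T, c i) s p := by
  rw [← measureReal_setOf_filter_eq_one hmeas hβp hindep hp0]
  congr! 3 with ω
  rw [sum_filter]
  refine Iff.of_eq (congrArg _ (sum_congr rfl fun i _ => ?_))
  rcases hval i ω with h | h <;> simp [h]

end Bernoulli

section BoldPlay

open Finset

variable {Ω : Type*} [MeasurableSpace Ω] {μ : Measure Ω} [IsProbabilityMeasure μ]
  {β : ℕ → Ω → ℝ} {p : ℝ} (hmeas : ∀ i, Measurable (β i)) (hval : ∀ i ω, β i ω = 0 ∨ β i ω = 1)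
  (hβp : ∀ i, μ {ω | β i ω = 1} = ENNReal.ofReal p) (hindep : iIndepFun β μ) (hp0 : 0 ≤ p)
include hmeas hval hβp hindep hp0

theorem measureReal_half_le_tsum_mul_le (hp : p ≤ 1 / 2) {c : ℕ → ℝ} (hc0 : ∀ i, 0 ≤ c i)
    (hc1 : ∑' i, c i = 1) : μ.real {ω | 1 / 2 ≤ ∑' i, c i * β i ω} ≤ p + (1 - p) * p := by
  have hc : Summable c := by
    by_contra h
    simp [tsum_eq_zero_of_not_summable h] at hc1
  obtain ⟨a, ha⟩ : ∃ a, 0 < c a := by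
    by_contra! h
    simp [funext fun i => (h i).antisymm (hc0 i)] at hc1
  obtain ⟨N, haN, hN⟩ := exists_lt_sum_range hc ha
  set ε := 1 - ∑ i ∈ range N, c i
  set s := (range N).erase a
  set F : Finset ℕ → Prop := fun T => 1 / 2 - ε ≤ ∑ i ∈ T, c i
  have hwin : {ω | 1 / 2 ≤ ∑' i, c i * β i ω} ⊆ {ω | 1 / 2 - ε ≤ ∑ i ∈ range N, c i * β i ω} :=
    fun ω hω => by
      have := tsum_mul_le_sum_mul_add hc hc0 (b := (β · ω))
        (fun i => by rcases hval i ω with h | h <;> simp [h])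
        (fun i => by rcases hval i ω with h | h <;> simp [h]) (range N)
      simp only [Set.mem_ofPred_eq] at hω ⊢
      linarith
  have hF : Monotone F := fun T U hTU hT =>
    hT.trans (sum_le_sum_of_subset_of_nonneg hTU fun i _ _ => hc0 i)
  -- the stakes in `s` total `1 - ε - c a < 2 * (1 / 2 - ε)`
  have hdual : ∀ T ⊆ s, F T → ¬F (s \ T) := fun T hT h1 h2 => by
    have := sum_sdiff hT (f := c)
    have := sum_erase_add (range N) c (mem_range.2 haN)
    simp only [F] at h1 h2
    linarith
  have hsplit : insert a s = range N := insert_erase (mem_range.2 haN)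
  calc μ.real {ω | 1 / 2 ≤ ∑' i, c i * β i ω}
      ≤ μ.real {ω | 1 / 2 - ε ≤ ∑ i ∈ range N, c i * β i ω} := measureReal_mono hwin
    _ = biasedProb F (insert a s) p := by
      rw [measureReal_setOf_le_sum_mul hmeas hβp hindep hp0 hval, hsplit]
    _ = (1 - p) * biasedProb F s p + p * biasedProb (fun T => F (insert a T)) s p :=
      biasedProb_insert s (notMem_erase a _)
    _ ≤ (1 - p) * p + p * 1 :=
      add_le_add (mul_le_mul_of_nonneg_left (biasedProb_le_self hF hdual hp0 hp) (by linarith))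
        (mul_le_mul_of_nonneg_left (biasedProb_le_one s hp0 (by linarith)) hp0)
    _ = p + (1 - p) * p := by ring

theorem measureReal_half_le_half_mul_add_half_mul :
    μ.real {ω | 1 / 2 ≤ 1 / 2 * β 0 ω + 1 / 2 * β 1 ω} = p + (1 - p) * p := by
  have hpair : {ω | (1 : ℝ) / 2 ≤ 1 / 2 * β 0 ω + 1 / 2 * β 1 ω}
      = {ω | 1 / 2 ≤ ∑ i ∈ {0, 1}, (fun _ => (1 / 2 : ℝ)) i * β i ω} := by
    simp
  rw [hpair, measureReal_setOf_le_sum_mul hmeas hβp hindep hp0 hval, biasedProb_insert _ (by simp),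
    ← insert_empty (a := 1), biasedProb_insert _ (notMem_empty 1),
    biasedProb_insert _ (notMem_empty 1), biasedProb_empty, biasedProb_empty, biasedProb_empty,
    biasedProb_empty]
  norm_num
  ring

end BoldPlay

/-- **Threshold `t = 1/2`: two equal stakes are optimal.** If `p ≤ 1/2`, then for any
nonnegative stake sequence `(c i)` summing to `1` placed on iid Bernoulli(p) bets,
`P(∑ c i * β i ≥ 1/2) ≤ p + (1-p)p`, with equality for `c 0 = c 1 = 1/2`. -/
theorem boldPlay_optimal_threshold_half {Ω : Type*} [MeasurableSpace Ω]
    (μ : Measure Ω) [IsProbabilityMeasure μ] (p : ℝ)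
    (β : ℕ → Ω → ℝ) (hmeas : ∀ i, Measurable (β i))
    (hval : ∀ i ω, β i ω = 0 ∨ β i ω = 1)
    (hβp : ∀ i, μ {ω | β i ω = 1} = ENNReal.ofReal p)
    (hindep : iIndepFun β μ)
    (hp0 : 0 ≤ p) (hp : p ≤ 1 / 2) :
    (∀ c : ℕ → ℝ, (∀ i, 0 ≤ c i) → (∑' i, c i) = 1 →
      (μ {ω | (1 : ℝ) / 2 ≤ ∑' i, c i * β i ω}).toReal ≤ p + (1 - p) * p) ∧
    (μ {ω | (1 : ℝ) / 2 ≤ (1 / 2) * β 0 ω + (1 / 2) * β 1 ω}).toReal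
      = p + (1 - p) * p :=
  ⟨fun _ hc0 hc1 => measureReal_half_le_tsum_mul_le hmeas hval hβp hindep hp0 hp hc0 hc1,
    measureReal_half_le_half_mul_add_half_mul hmeas hval hβp hindep hp0⟩
end
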